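/- Conversely, if {L_i}_{i=1}^n is an n-independent family of self-dual cones with K ⊇ L_i ⊇ K* for all i, then setting K_i := Σ_{j≥i} L_j yields an exact hierarchy of pre-dual cones K ⊇ K₁ ⊋ K₂ ⊋ … ⊋ K_n with K ⊇ K_i ⊇ K*, and each L_i is a self-dual modification of K_i. -/

import Mathlib

open scoped RealInnerProductSpace

variable {V : Type*} [NormedAddCommGroup V] [InnerProductSpace ℝ V] [FiniteDimensional ℝ V]

/-- The dual cone of a set with respect to the real inner product. -/
def dualCone (K : Set V) : Set V := {x | ∀ y ∈ K, 0 ≤ ⟪x, y⟫}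

/-- A positive cone: closed, convex, with nonempty interior, closed under nonnegative
scalar multiplication and addition, and pointed. -/
def IsPositiveCone (K : Set V) : Prop :=
  IsClosed K ∧ Convex ℝ K ∧ (interior K).Nonempty ∧
  (∀ x ∈ K, ∀ c : ℝ, 0 ≤ c → c • x ∈ K) ∧
  (∀ x ∈ K, ∀ y ∈ K, x + y ∈ K) ∧
  K ∩ (-K) = {0}

open scoped Pointwise

open Filter Topology

theorem dualCone_anti {S T : Set V} (h : S ⊆ T) : dualCone T ⊆ dualCone S :=
  fun x hx y hy => hx y (h hy)

theorem zero_mem_of_isPositiveCone {K : Set V} (hK : IsPositiveCone K) : (0 : V) ∈ K := by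
  have h := hK.2.2.2.2.2
  have h0 : (0 : V) ∈ K ∩ (-K) := by rw [h]; rfl
  exact h0.1

open scoped Pointwise in
theorem sum_sets_subset {ι : Type*} {s t : Finset ι} (hst : s ⊆ t) (f : ι → Set V)
    (h0 : ∀ j ∈ t, (0:V) ∈ f j) : (∑ j ∈ s, f j) ⊆ ∑ j ∈ t, f j := by
  classical
  intro x hx
  rw [Set.mem_finset_sum] at hx ⊢
  obtain ⟨g, hg, hsum⟩ := hx
  refine ⟨fun j => if j ∈ s then g j else 0, ?_, ?_⟩
  · intro j hj
    by_cases hjs : j ∈ s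
    · simpa [hjs] using hg hjs
    · simpa [hjs] using h0 j hj
  · rw [← hsum, ← Finset.sum_subset hst (fun j _ hjs => by simp [hjs])]
    exact Finset.sum_congr rfl (fun j hj => by simp [hj])

open scoped Pointwise in
theorem isClosed_add_of_cones {C D : Set V} (hC : IsClosed C) (hD : IsClosed D)
    (hCs : ∀ x ∈ C, ∀ c : ℝ, 0 ≤ c → c • x ∈ C)
    (hDs : ∀ x ∈ D, ∀ c : ℝ, 0 ≤ c → c • x ∈ D)
    (hCD : ∀ x ∈ C, ∀ y ∈ D, x + y = 0 → x = 0) :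
    IsClosed (C + D) := by
  refine isClosed_of_closure_subset fun x hx => ?_
  obtain ⟨u, hu, hux⟩ := mem_closure_iff_seq_limit.mp hx
  choose c hc d hd hcd using fun m => Set.mem_add.mp (hu m)
  set s : ℕ → ℝ := fun m => 1 + ‖c m‖ with hsdef
  have hs1 : ∀ m, 1 ≤ s m := fun m => le_add_of_nonneg_right (norm_nonneg _)
  have hspos : ∀ m, 0 < s m := fun m => lt_of_lt_of_le one_pos (hs1 m)
  set w : ℕ → V := fun m => (s m)⁻¹ • c m with hwdef
  have hwC : ∀ m, w m ∈ C := fun m => hCs _ (hc m) _ (inv_nonneg.mpr (hspos m).le)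
  have hnw : ∀ m, ‖w m‖ = 1 - (s m)⁻¹ := by
    intro m
    have : ‖c m‖ = s m - 1 := by simp [hsdef]
    rw [hwdef]
    simp only [norm_smul, norm_inv, Real.norm_of_nonneg (hspos m).le, this, mul_sub,
      inv_mul_cancel₀ (hspos m).ne', mul_one]
  have hwball : ∀ m, w m ∈ Metric.closedBall (0:V) 1 := by
    intro m
    rw [Metric.mem_closedBall, dist_zero_right, hnw m]
    have := inv_nonneg.mpr (hspos m).le
    linarith
  have hIcc : ∀ m, (s m)⁻¹ ∈ Set.Icc (0:ℝ) 1 :=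
    fun m => ⟨inv_nonneg.mpr (hspos m).le, inv_le_one_of_one_le₀ (hs1 m)⟩
  obtain ⟨⟨e, a⟩, ⟨⟨heball, heC⟩, haIcc⟩, φ, hφ, hlim⟩ :=
    (((isCompact_closedBall (0:V) 1).inter_right hC).prod isCompact_Icc).tendsto_subseq
      (x := fun m => (w m, (s m)⁻¹)) (fun m => ⟨⟨hwball m, hwC m⟩, hIcc m⟩)
  have hwlim : Tendsto (fun m => w (φ m)) atTop (𝓝 e) :=
    (continuous_fst.tendsto _).comp hlim
  have hslim : Tendsto (fun m => (s (φ m))⁻¹) atTop (𝓝 a) :=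
    (continuous_snd.tendsto _).comp hlim
  have huφ : Tendsto (fun m => u (φ m)) atTop (𝓝 x) := hux.comp hφ.tendsto_atTop
  rcases eq_or_lt_of_le haIcc.1 with ha0 | hapos
  · -- a = 0 : contradiction
    exfalso
    have hslim0 : Tendsto (fun m => (s (φ m))⁻¹) atTop (𝓝 (0:ℝ)) := ha0 ▸ hslim
    have h1 : Tendsto (fun m => (s (φ m))⁻¹ • u (φ m)) atTop (𝓝 (0:V)) := by
      simpa using hslim0.smul huφ
    have h2 : Tendsto (fun m => (s (φ m))⁻¹ • d (φ m)) atTop (𝓝 (-e)) := by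
      have h3 := h1.sub hwlim
      rw [zero_sub] at h3
      refine h3.congr fun m => ?_
      rw [hwdef]
      show (s (φ m))⁻¹ • u (φ m) - (s (φ m))⁻¹ • c (φ m) = _
      rw [← smul_sub]
      congr 1
      exact (eq_sub_of_add_eq' (hcd (φ m))).symm
    have hneD : -e ∈ D :=
      hD.mem_of_tendsto h2 (Eventually.of_forall fun m =>
        hDs _ (hd _) _ (inv_nonneg.mpr (hspos _).le))
    have he0 : e = 0 := hCD e heC (-e) hneD (by simp)
    have hn1 : Tendsto (fun m => ‖w (φ m)‖) atTop (𝓝 (1:ℝ)) := by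
      have h4 : Tendsto (fun m => 1 - (s (φ m))⁻¹) atTop (𝓝 (1 - 0 : ℝ)) :=
        tendsto_const_nhds.sub hslim0
      rw [sub_zero] at h4
      exact h4.congr fun m => (hnw (φ m)).symm
    have hn2 : Tendsto (fun m => ‖w (φ m)‖) atTop (𝓝 ‖e‖) := hwlim.norm
    have : ‖e‖ = 1 := tendsto_nhds_unique hn2 hn1
    rw [he0, norm_zero] at this
    exact one_ne_zero this.symm
  · -- a > 0
    have hsa : Tendsto (fun m => s (φ m)) atTop (𝓝 a⁻¹) := by
      simpa [inv_inv] using hslim.inv₀ (ne_of_gt hapos)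
    have hclim : Tendsto (fun m => c (φ m)) atTop (𝓝 (a⁻¹ • e)) := by
      refine (hsa.smul hwlim).congr fun m => ?_
      rw [hwdef]
      show s (φ m) • (s (φ m))⁻¹ • c (φ m) = _
      rw [smul_smul, mul_inv_cancel₀ (hspos _).ne', one_smul]
    have hcC : a⁻¹ • e ∈ C :=
      hC.mem_of_tendsto hclim (Eventually.of_forall fun m => hc _)
    have hdlim : Tendsto (fun m => d (φ m)) atTop (𝓝 (x - a⁻¹ • e)) := by
      refine (huφ.sub hclim).congr fun m => ?_
      exact (eq_sub_of_add_eq' (hcd (φ m))).symm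
    have hdD : x - a⁻¹ • e ∈ D :=
      hD.mem_of_tendsto hdlim (Eventually.of_forall fun m => hd _)
    have : a⁻¹ • e + (x - a⁻¹ • e) ∈ C + D := Set.add_mem_add hcC hdD
    simpa using this

open scoped Pointwise in
theorem sum_cones {n : ℕ} (K : Set V) (hK : IsPositiveCone K)
    (f : Fin n → Set V) (hf : ∀ j, IsPositiveCone (f j)) (hfK : ∀ j, f j ⊆ K)
    (s : Finset (Fin n)) :
    IsClosed (∑ j ∈ s, f j) ∧ (∑ j ∈ s, f j) ⊆ K ∧
    (∀ x ∈ ∑ j ∈ s, f j, ∀ c : ℝ, 0 ≤ c → c • x ∈ ∑ j ∈ s, f j) ∧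
    (∀ x ∈ ∑ j ∈ s, f j, ∀ y ∈ ∑ j ∈ s, f j, x + y ∈ ∑ j ∈ s, f j) := by
  classical
  have h0K : (0 : V) ∈ K := zero_mem_of_isPositiveCone hK
  induction s using Finset.induction_on with
  | empty =>
    simp only [Finset.sum_empty]
    refine ⟨?_, ?_, ?_, ?_⟩
    · rw [← Set.singleton_zero]
      exact isClosed_singleton
    · intro x hx; rw [Set.mem_zero] at hx; subst hx; exact h0K
    · intro x hx c hc; rw [Set.mem_zero] at hx; subst hx; simp [Set.mem_zero]
    · intro x hx y hy; rw [Set.mem_zero] at hx hy; subst hx; subst hy; simp [Set.mem_zero]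
  | insert _ _ hj ih =>
    rename_i j t
    obtain ⟨ihC, ihK, ihS, ihA⟩ := ih
    rw [Finset.sum_insert hj]
    refine ⟨?_, ?_, ?_, ?_⟩
    · refine isClosed_add_of_cones (hf j).1 ihC (hf j).2.2.2.1 ihS ?_
      intro x hx y hy hxy
      have hx' : x ∈ K ∩ (-K) := ⟨hfK j hx, by
        rw [Set.mem_neg]
        have hxy' : -x = y := by rw [← neg_eq_of_add_eq_zero_left hxy, neg_neg]
        rw [hxy']; exact ihK hy⟩
      rw [hK.2.2.2.2.2] at hx'
      exact hx'
    · intro x hx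
      obtain ⟨p, hp, q, hq, rfl⟩ := Set.mem_add.mp hx
      exact hK.2.2.2.2.1 p (hfK j hp) q (ihK hq)
    · intro x hx c hc
      obtain ⟨p, hp, q, hq, rfl⟩ := Set.mem_add.mp hx
      rw [smul_add]
      exact Set.add_mem_add ((hf j).2.2.2.1 p hp c hc) (ihS q hq c hc)
    · intro x hx y hy
      obtain ⟨p, hp, q, hq, rfl⟩ := Set.mem_add.mp hx
      obtain ⟨p', hp', q', hq', rfl⟩ := Set.mem_add.mp hy
      rw [add_add_add_comm]
      exact Set.add_mem_add ((hf j).2.2.2.2.1 p hp p' hp') (ihA q hq q' hq')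

open scoped Pointwise in
theorem hierarchy_of_independent_selfDual_family (n : ℕ) (K : Set V)
    (Ls : Fin n → Set V)
    (hK : IsPositiveCone K)
    (hpos : ∀ i, IsPositiveCone (Ls i))
    (hsd : ∀ i, dualCone (Ls i) = Ls i)
    (hsub : ∀ i, Ls i ⊆ K) (hsup : ∀ i, dualCone K ⊆ Ls i)
    (hind : ∀ i, ¬ Ls i ⊆ ∑ j ∈ Finset.univ.erase i, Ls j)
    (Ks : Fin n → Set V)
    (hKs : ∀ i, Ks i = ∑ j ∈ Finset.univ.filter (fun j => i ≤ j), Ls j) :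
    (∀ i, IsPositiveCone (Ks i)) ∧ (∀ i, dualCone (Ks i) ⊆ Ks i) ∧
    (∀ i, Ks i ⊆ K) ∧ (∀ i, dualCone K ⊆ Ks i) ∧
    (∀ i j : Fin n, i < j → Ks j ⊂ Ks i) ∧
    (∀ i, Ls i ⊆ Ks i ∧ dualCone (Ks i) ⊆ Ls i) := by
  classical
  have h0L : ∀ i, (0 : V) ∈ Ls i := fun i => zero_mem_of_isPositiveCone (hpos i)
  have hmain := fun s => sum_cones K hK Ls hpos hsub s
  have hLK : ∀ i, Ls i ⊆ Ks i := by
    intro i x hx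
    rw [hKs i]
    refine sum_sets_subset (s := {i}) ?_ Ls (fun j _ => h0L j) ?_
    · intro j hj
      rw [Finset.mem_singleton] at hj
      subst hj
      simp
    · simpa [Finset.sum_singleton] using hx
  have hKsK : ∀ i, Ks i ⊆ K := fun i => (hKs i) ▸ (hmain _).2.1
  have hdualL : ∀ i, dualCone (Ks i) ⊆ Ls i := fun i =>
    (hsd i) ▸ dualCone_anti (hLK i)
  have h0Ks : ∀ i, (0 : V) ∈ Ks i := fun i => hLK i (h0L i)
  refine ⟨?_, ?_, hKsK, ?_, ?_, fun i => ⟨hLK i, hdualL i⟩⟩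
  · intro i
    have hm := hmain (Finset.univ.filter (fun j => i ≤ j))
    rw [← hKs i] at hm
    obtain ⟨hcl, hsubK, hsm, had⟩ := hm
    refine ⟨hcl, ?_, ?_, hsm, had, ?_⟩
    · intro x hx y hy a b ha hb hab
      exact had _ (hsm x hx a ha) _ (hsm y hy b hb)
    · exact ((hpos i).2.2.1).mono (interior_mono (hLK i))
    · refine Set.Subset.antisymm ?_ ?_
      · intro x hx
        have : x ∈ K ∩ (-K) := ⟨hKsK i hx.1, by
          rw [Set.mem_neg]
          exact hKsK i (Set.mem_neg.mp hx.2)⟩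
        rwa [hK.2.2.2.2.2] at this
      · intro x hx
        rw [Set.mem_singleton_iff] at hx
        subst hx
        exact ⟨h0Ks i, by rw [Set.mem_neg, neg_zero]; exact h0Ks i⟩
  · exact fun i => (hdualL i).trans (hLK i)
  · exact fun i => (hsup i).trans (hLK i)
  · intro i j hij
    rw [ssubset_iff_subset_not_subset]
    constructor
    · rw [hKs i, hKs j]
      refine sum_sets_subset ?_ Ls (fun k _ => h0L k)
      intro k hk
      rw [Finset.mem_filter] at hk ⊢
      exact ⟨hk.1, le_trans hij.le hk.2⟩
    · intro hcon
      obtain ⟨x, hxL, hxn⟩ := Set.not_subset.mp (hind i)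
      refine hxn ?_
      have hx1 : x ∈ Ks j := hcon (hLK i hxL)
      rw [hKs j] at hx1
      refine sum_sets_subset ?_ Ls (fun k _ => h0L k) hx1
      intro k hk
      rw [Finset.mem_filter] at hk
      rw [Finset.mem_erase]
      exact ⟨(lt_of_lt_of_le hij hk.2).ne', hk.1⟩
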